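/- Let G be a finite connected simple graph on n vertices with m edges and matching number μ(G). Then for any magnetic potential α on G, λ_{μ(G)+n-m}(Δ_α^G) ≤ 2 ≤ λ_{n-μ(G)+1}(Δ_α^G). -/

import Mathlib

open Classical in
/-- The discrete magnetic Laplacian of a simple graph `G` on `Fin n` with magnetic
potential `α`. -/
noncomputable def magLap {n : ℕ} (G : SimpleGraph (Fin n)) (α : Fin n → Fin n → ℝ) :
    Matrix (Fin n) (Fin n) ℂ :=
  Matrix.of fun u v =>
    if u = v then ((G.neighborSet u).ncard : ℂ)
    else if G.Adj u v then -Complex.exp (α u v * Complex.I) else 0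

lemma magLap_isHermitian {n : ℕ} (G : SimpleGraph (Fin n)) (α : Fin n → Fin n → ℝ)
    (hα : ∀ u v, α v u = -α u v) : (magLap G α).IsHermitian := by
  rw [Matrix.IsHermitian]
  ext u v
  simp only [Matrix.conjTranspose_apply, magLap, Matrix.of_apply]
  by_cases huv : u = v
  · subst huv; simp
  · have hvu : ¬ v = u := fun h => huv h.symm
    rw [if_neg hvu, if_neg huv]
    by_cases hadj : G.Adj u v
    · rw [if_pos hadj.symm, if_pos hadj, star_neg]
      have h1 : star (Complex.exp ((α v u : ℂ) * Complex.I)) =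
          Complex.exp ((starRingEnd ℂ) ((α v u : ℂ) * Complex.I)) :=
        (Complex.exp_conj _).symm
      rw [h1]
      congr 1
      rw [hα u v]
      simp [map_mul, Complex.conj_ofReal, Complex.conj_I]
    · rw [if_neg (fun h => hadj h.symm), if_neg hadj, star_zero]

/-- The `k`-th smallest eigenvalue (1-indexed, with multiplicity) of a Hermitian
matrix, as an extended real number; `⊥` for `k = 0` and `⊤` for `k > n`. -/
noncomputable def lamb {n : ℕ} {A : Matrix (Fin n) (Fin n) ℂ} (hA : A.IsHermitian) (k : ℕ) :
    EReal :=
  if h : 1 ≤ k ∧ k ≤ n then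
    (((hA.eigenvalues ∘ Tuple.sort hA.eigenvalues) ⟨k - 1, by omega⟩ : ℝ) : EReal)
  else if k = 0 then ⊥ else ⊤

/-- The matching number of a graph: the maximal number of pairwise independent edges. -/
noncomputable def matchingNumber {n : ℕ} (G : SimpleGraph (Fin n)) : ℕ :=
  sSup {k : ℕ | ∃ M : G.Subgraph, M.IsMatching ∧ M.edgeSet.ncard = k}

/-!
The quadratic form of `Δ_α` is `½ ∑_{i ~ j} |x i - e^{iα(i,j)} x j|²`, and by Courant–Fischer a
subspace of dimension `d` on which this form is `≤ 2‖x‖²` (resp. `≥ 2‖x‖²`) yields `d`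
eigenvalues `≤ 2` (resp. `≥ 2`). Fix a maximum matching `M`.

The `m - μ` equations `x i = e^{iα(i,j)} x j`, one for each edge outside `M`, cut out a subspace
of dimension at least `n - m + μ` on which only the edges of `M` contribute to the form, each at
most `2 (|x i|² + |x j|²)`; since the edges of `M` are disjoint the form is `≤ 2‖x‖²` there.

Vectors supported on the matched vertices with `x i = -e^{iα(i,j)} x j` on each edge of `M` form
a subspace of dimension at least `μ`; there every ordered pair `(i, j)` of `M` contributes
`|2 x i|²`, so the edges of `M` alone already give `2‖x‖²`.
-/

open Matrix Complex Finset

lemma Module.exists_mem_ne_zero_forall_apply_eq_zero {K V ι : Type*} [Field K] [AddCommGroup V]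
    [Module K V] [Finite ι] (S : Submodule K V) [FiniteDimensional K S] (L : V →ₗ[K] ι → K)
    (P : ι → Prop) (h : Nat.card {i // P i} < Module.finrank K S) :
    ∃ x ∈ S, x ≠ 0 ∧ ∀ i, P i → L x i = 0 := by
  classical
  have := Fintype.ofFinite ι
  let T : S →ₗ[K] {i // P i} → K := LinearMap.funLeft K K Subtype.val ∘ₗ L ∘ₗ S.subtype
  have hT : ¬ Function.Injective T := fun hinj => by
    have := LinearMap.finrank_le_finrank_of_injective hinj
    rw [Module.finrank_fintype_fun_eq_card, ← Nat.card_eq_fintype_card] at this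
    omega
  obtain ⟨x, hxT, hx0⟩ := (Submodule.ne_bot_iff _).mp (mt LinearMap.ker_eq_bot.mp hT)
  exact ⟨x, x.2, by simpa using hx0, fun i hi => congrFun hxT ⟨i, hi⟩⟩

lemma LinearMap.finrank_sub_card_le_finrank_ker_pi {K V ι : Type*} [Field K] [AddCommGroup V]
    [Module K V] [FiniteDimensional K V] [Finite ι] (f : ι → V →ₗ[K] K) :
    Module.finrank K V - Nat.card ι ≤ Module.finrank K (LinearMap.ker (LinearMap.pi f)) := by
  have := Fintype.ofFinite ι
  have hrange := Submodule.finrank_le (LinearMap.range (LinearMap.pi f))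
  rw [Module.finrank_fintype_fun_eq_card, ← Nat.card_eq_fintype_card] at hrange
  have := LinearMap.finrank_range_add_finrank_ker (LinearMap.pi f)
  omega

lemma LinearMap.mem_ker_pi_iff {R M ι : Type*} [Semiring R] [AddCommMonoid M] [Module R M]
    {f : ι → M →ₗ[R] R} {x : M} : x ∈ LinearMap.ker (LinearMap.pi f) ↔ ∀ i, f i x = 0 := by
  simp [funext_iff]

lemma sum_mul_normSq_pos {ι : Type*} [Fintype ι] {w : ι → ℝ} {y : ι → ℂ} (hy : y ≠ 0)
    (h : ∀ i, w i ≤ 0 → y i = 0) : 0 < ∑ i, w i * normSq (y i) := by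
  obtain ⟨i, hi⟩ := Function.ne_iff.mp hy
  refine sum_pos' (fun j _ => ?_) ⟨i, mem_univ _, ?_⟩
  · by_cases hj : w j ≤ 0
    · simp [h j hj]
    · exact mul_nonneg (le_of_not_ge hj) (normSq_nonneg _)
  · exact mul_pos (lt_of_not_ge (mt (h i) hi)) (normSq_pos.mpr hi)

namespace Matrix

variable {ι : Type*} [Fintype ι]

lemma re_star_dotProduct_self (y : ι → ℂ) : (star y ⬝ᵥ y).re = ∑ i, normSq (y i) := by
  simp [dotProduct, re_sum, normSq_apply]

lemma star_mulVec_dotProduct_mulVec_mulVec (U B : Matrix ι ι ℂ) (y : ι → ℂ) :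
    star (U *ᵥ y) ⬝ᵥ (B *ᵥ (U *ᵥ y)) = star y ⬝ᵥ ((star U * B * U) *ᵥ y) := by
  rw [star_mulVec, ← dotProduct_mulVec, mulVec_mulVec, mulVec_mulVec, star_eq_conjTranspose,
    Matrix.mul_assoc]

variable [DecidableEq ι] {U : Matrix ι ι ℂ}

lemma re_star_dotProduct_self_unitary_mulVec (hU : U ∈ unitaryGroup ι ℂ) (y : ι → ℂ) :
    (star (U *ᵥ y) ⬝ᵥ (U *ᵥ y)).re = ∑ i, normSq (y i) := by
  have := star_mulVec_dotProduct_mulVec_mulVec U 1 y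
  rw [one_mulVec, Matrix.mul_one, mem_unitaryGroup_iff'.mp hU, one_mulVec] at this
  rw [this, re_star_dotProduct_self]

lemma finrank_le_card_of_mem_unitaryGroup (hU : U ∈ unitaryGroup ι ℂ) (w : ι → ℝ)
    (S : Submodule ℂ (ι → ℂ)) (hS : ∀ y, U *ᵥ y ∈ S → ∑ i, w i * normSq (y i) ≤ 0) :
    Module.finrank ℂ S ≤ #{i | w i ≤ 0} := by
  by_contra! hlt
  obtain ⟨x, hxS, hx0, hx⟩ := Module.exists_mem_ne_zero_forall_apply_eq_zero S
    (star U).mulVecLin (fun i => w i ≤ 0) (by rwa [Nat.card_eq_fintype_card, Fintype.card_subtype])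
  have hUx : U *ᵥ (star U *ᵥ x) = x := by
    rw [mulVec_mulVec, mem_unitaryGroup_iff.mp hU, one_mulVec]
  have hy0 : star U *ᵥ x ≠ 0 := fun h0 => hx0 (by rw [← hUx, h0, mulVec_zero])
  exact (sum_mul_normSq_pos hy0 hx).not_ge (hS _ (by rwa [hUx]))

namespace IsHermitian

variable {A : Matrix ι ι ℂ} (hA : A.IsHermitian)

lemma re_star_dotProduct_mulVec_eigenvectorUnitary (y : ι → ℂ) :
    (star ((hA.eigenvectorUnitary : Matrix ι ι ℂ) *ᵥ y) ⬝ᵥ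
      (A *ᵥ ((hA.eigenvectorUnitary : Matrix ι ι ℂ) *ᵥ y))).re =
      ∑ i, hA.eigenvalues i * normSq (y i) := by
  have hdiag := hA.conjStarAlgAut_star_eigenvectorUnitary
  rw [Unitary.conjStarAlgAut_star_apply] at hdiag
  rw [star_mulVec_dotProduct_mulVec_mulVec, hdiag]
  simp only [dotProduct, Pi.star_apply, RCLike.star_def, coe_algebraMap, mulVec_diagonal,
    Function.comp_apply, re_sum, mul_re, conj_re, ofReal_re, ofReal_im, zero_mul, sub_zero,
    conj_im, mul_im, add_zero, neg_mul, sub_neg_eq_add, normSq_apply]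
  exact sum_congr rfl fun i _ => by ring

lemma finrank_le_card_eigenvalues_le (c : ℝ) (S : Submodule ℂ (ι → ℂ))
    (hS : ∀ x ∈ S, (star x ⬝ᵥ (A *ᵥ x)).re ≤ c * (star x ⬝ᵥ x).re) :
    Module.finrank ℂ S ≤ #{i | hA.eigenvalues i ≤ c} := by
  have hU := hA.eigenvectorUnitary.2
  refine (finrank_le_card_of_mem_unitaryGroup hU (fun i => hA.eigenvalues i - c) S
    fun y hy => ?_).trans_eq (by simp only [sub_nonpos])
  have := hS _ hy
  rw [hA.re_star_dotProduct_mulVec_eigenvectorUnitary, re_star_dotProduct_self_unitary_mulVec hU,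
    mul_sum] at this
  simpa only [sub_mul, sum_sub_distrib, sub_nonpos]

lemma finrank_le_card_le_eigenvalues (c : ℝ) (S : Submodule ℂ (ι → ℂ))
    (hS : ∀ x ∈ S, c * (star x ⬝ᵥ x).re ≤ (star x ⬝ᵥ (A *ᵥ x)).re) :
    Module.finrank ℂ S ≤ #{i | c ≤ hA.eigenvalues i} := by
  have hU := hA.eigenvectorUnitary.2
  refine (finrank_le_card_of_mem_unitaryGroup hU (fun i => c - hA.eigenvalues i) S
    fun y hy => ?_).trans_eq (by simp only [sub_nonpos])
  have := hS _ hy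
  rw [hA.re_star_dotProduct_mulVec_eigenvectorUnitary, re_star_dotProduct_self_unitary_mulVec hU,
    mul_sum] at this
  simpa only [sub_mul, sum_sub_distrib, sub_nonpos]

end IsHermitian

end Matrix

lemma Monotone.le_of_lt_card_filter_le {α : Type*} [LinearOrder α] {n : ℕ} {g : Fin n → α}
    (hg : Monotone g) {c : α} {i : Fin n} (hi : (i : ℕ) < #{j | g j ≤ c}) : g i ≤ c := by
  by_contra! h
  have hsub : ({j | g j ≤ c} : Finset (Fin n)) ⊆ Iio i := fun j hj =>
    mem_Iio.mpr (lt_of_not_ge fun hij => ((mem_filter.mp hj).2.trans_lt h).not_ge (hg hij))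
  have := card_le_card hsub
  rw [Fin.card_Iio] at this
  omega

lemma Monotone.le_of_card_filter_lt_le {α : Type*} [LinearOrder α] {n : ℕ} {g : Fin n → α}
    (hg : Monotone g) {c : α} {i : Fin n} (hi : #{j | g j < c} ≤ i) : c ≤ g i := by
  by_contra! h
  have hsub : Iic i ⊆ ({j | g j < c} : Finset (Fin n)) := fun j hj =>
    mem_filter.mpr ⟨mem_univ _, (hg (mem_Iic.mp hj)).trans_lt h⟩
  have := card_le_card hsub
  rw [Fin.card_Iic] at this
  omega

lemma Tuple.card_filter_comp_sort {α : Type*} [LinearOrder α] {n : ℕ} (f : Fin n → α)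
    (p : α → Prop) [DecidablePred p] : #{j | p ((f ∘ Tuple.sort f) j)} = #{j | p (f j)} :=
  card_equiv (Tuple.sort f) (by simp)

section lamb

variable {n : ℕ} {A : Matrix (Fin n) (Fin n) ℂ} (hA : A.IsHermitian)

lemma lamb_le_of_le_card {c : ℝ} {k : ℕ} (hk : k ≤ #{i | hA.eigenvalues i ≤ c}) :
    lamb hA k ≤ c := by
  have hkn : k ≤ n := hk.trans ((card_le_univ _).trans_eq (Fintype.card_fin n))
  unfold lamb
  split_ifs with h h0
  · refine EReal.coe_le_coe_iff.mpr ((Tuple.monotone_sort _).le_of_lt_card_filter_le ?_)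
    rw [Tuple.card_filter_comp_sort hA.eigenvalues (· ≤ c), Fin.val_mk]
    omega
  · exact bot_le
  · omega

lemma le_lamb_of_card_lt {c : ℝ} {k : ℕ} (hk : #{i | hA.eigenvalues i < c} < k) :
    (c : EReal) ≤ lamb hA k := by
  unfold lamb
  split_ifs with h h0
  · refine EReal.coe_le_coe_iff.mpr ((Tuple.monotone_sort _).le_of_card_filter_lt_le ?_)
    rw [Tuple.card_filter_comp_sort hA.eigenvalues (· < c), Fin.val_mk]
    omega
  · omega
  · exact le_top

end lamb

lemma re_star_mul_sub_exp_add_re_star_mul_sub_exp (a b : ℂ) (θ : ℝ) :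
    (star a * (a - cexp (θ * I) * b)).re + (star b * (b - cexp ((-θ : ℝ) * I) * a)).re =
      normSq (a - cexp (θ * I) * b) := by
  simp only [star_def, mul_re, mul_im, sub_re, sub_im, conj_re, conj_im, normSq_apply,
    exp_ofReal_mul_I_re, exp_ofReal_mul_I_im, Real.cos_neg, Real.sin_neg]
  linear_combination -(b.re * b.re + b.im * b.im) * Real.sin_sq_add_cos_sq θ

lemma normSq_sub_exp_mul_I_mul_le (a b : ℂ) (θ : ℝ) :
    normSq (a - cexp (θ * I) * b) ≤ 2 * (normSq a + normSq b) := by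
  have hb : normSq (cexp (θ * I) * b) = normSq b := by
    rw [normSq_mul, normSq_eq_norm_sq, norm_exp_ofReal_mul_I, one_pow, one_mul]
  linarith [normSq_add a (cexp (θ * I) * b), normSq_sub a (cexp (θ * I) * b),
    normSq_nonneg (a + cexp (θ * I) * b)]

lemma eq_mul_exp_mul_I_mul_symm {V : Type*} {α : V → V → ℝ} (hα : ∀ u v, α v u = -α u v)
    {s : ℂ} (hs : s * s = 1) {x : V → ℂ} {u v : V} (h : x u = s * cexp (α u v * I) * x v) :
    x v = s * cexp (α v u * I) * x u := by
  have hω : cexp (α v u * I) * cexp (α u v * I) = 1 := by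
    rw [← Complex.exp_add, hα u v]
    push_cast
    simp
  rw [h]
  linear_combination (-(x v) * cexp (α v u * I) * cexp (α u v * I)) * hs - x v * hω

lemma sum_sum_ite_swap {ι β : Type*} [Fintype ι] [AddCommMonoid β] {r : ι → ι → Prop}
    [DecidableRel r] (hr : ∀ i j, r i j → r j i) (f : ι → ι → β) :
    (∑ i, ∑ j, if r i j then f i j else 0) = ∑ i, ∑ j, if r i j then f j i else 0 := by
  rw [sum_comm]
  exact sum_congr rfl fun i _ => sum_congr rfl fun j _ => if_congr ⟨hr j i, hr i j⟩ rfl rfl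

lemma Sym2.rel_of_rel_out {α : Type*} {r : α → α → Prop} (hr : ∀ a b, r a b → r b a) {a b : α}
    (h : r s(a, b).out.1 s(a, b).out.2) : r a b := by
  have hout : s(s(a, b).out.1, s(a, b).out.2) = s(a, b) := s(a, b).out_eq
  rcases Sym2.eq_iff.mp hout with ⟨h1, h2⟩ | ⟨h1, h2⟩
  · rwa [h1, h2] at h
  · exact hr _ _ (by rwa [h1, h2] at h)

namespace SimpleGraph.Subgraph.IsMatching

variable {V : Type*} [Fintype V] {G : SimpleGraph V} {M : G.Subgraph}

lemma sum_ite_adj {β : Type*} [AddCommMonoid β] [DecidableRel M.Adj]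
    [DecidablePred (· ∈ M.verts)] (hM : M.IsMatching) (v : V) (b : β) :
    (∑ w, if M.Adj v w then b else 0) = if v ∈ M.verts then b else 0 := by
  split_ifs with hv
  · obtain ⟨w, hw, huniq⟩ := hM hv
    rw [sum_eq_single w (fun u _ hu => if_neg fun h => hu (huniq u h)) (by simp), if_pos hw]
  · exact sum_eq_zero fun w _ => if_neg fun h => hv h.fst_mem

lemma ncard_verts (hM : M.IsMatching) : M.verts.ncard = 2 * M.edgeSet.ncard := by
  classical
  calc M.verts.ncard = ∑ v, if v ∈ M.verts then 1 else 0 := by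
        simp [Set.ncard_eq_toFinset_card']
    _ = ∑ v, ∑ w, if M.Adj v w then 1 else 0 := by simp_rw [hM.sum_ite_adj]
    _ = ∑ v, M.spanningCoe.degree v :=
        sum_congr rfl fun v _ => (M.spanningCoe.degree_eq_sum_if_adj (R := ℕ) v).symm
    _ = 2 * M.edgeSet.ncard := by
        rw [sum_degrees_eq_twice_card_edges, ← Set.ncard_coe_finset, coe_edgeFinset,
          edgeSet_spanningCoe]

end SimpleGraph.Subgraph.IsMatching

section MagneticLaplacian

open scoped Classical

variable {n : ℕ} (G : SimpleGraph (Fin n)) (α : Fin n → Fin n → ℝ)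

lemma magLap_mulVec_apply (x : Fin n → ℂ) (i : Fin n) :
    (magLap G α *ᵥ x) i = ∑ j, if G.Adj i j then x i - cexp (α i j * I) * x j else 0 := by
  have hdeg : ((G.neighborSet i).ncard : ℂ) = ∑ j, if G.Adj i j then 1 else 0 := by
    rw [← G.degree_eq_sum_if_adj, ← G.card_neighborSet_eq_degree, Set.ncard_eq_toFinset_card',
      Set.toFinset_card]
  have hterm : ∀ j, magLap G α i j * x j =
      (if i = j then ((G.neighborSet i).ncard : ℂ) * x i else 0) +
        if G.Adj i j then -(cexp (α i j * I) * x j) else 0 := by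
    intro j
    by_cases hij : i = j
    · subst hij
      simp [magLap]
    · by_cases hadj : G.Adj i j <;> simp [magLap, hij, hadj]
  simp only [mulVec, dotProduct, hterm, sum_add_distrib, sum_ite_eq, mem_univ, if_true, hdeg,
    sum_mul]
  rw [← sum_add_distrib]
  refine sum_congr rfl fun j _ => ?_
  split_ifs <;> ring

lemma re_star_dotProduct_magLap_mulVec (hα : ∀ u v, α v u = -α u v) (x : Fin n → ℂ) :
    (star x ⬝ᵥ (magLap G α *ᵥ x)).re =
      (∑ i, ∑ j, if G.Adj i j then normSq (x i - cexp (α i j * I) * x j) else 0) / 2 := by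
  set g : Fin n → Fin n → ℝ := fun i j => (star (x i) * (x i - cexp (α i j * I) * x j)).re
  have hform : (star x ⬝ᵥ (magLap G α *ᵥ x)).re = ∑ i, ∑ j, if G.Adj i j then g i j else 0 := by
    simp only [dotProduct, magLap_mulVec_apply, Pi.star_apply, mul_sum, mul_ite, mul_zero, re_sum]
    refine sum_congr rfl fun i _ => sum_congr rfl fun j _ => ?_
    split_ifs <;> simp [g]
  rw [hform, eq_div_iff two_ne_zero, mul_two]
  nth_rewrite 2 [sum_sum_ite_swap fun _ _ h => h.symm]
  rw [← sum_add_distrib]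
  refine sum_congr rfl fun i _ => ?_
  rw [← sum_add_distrib]
  refine sum_congr rfl fun j _ => ?_
  split_ifs
  · simp only [g, hα i j]
    exact re_star_mul_sub_exp_add_re_star_mul_sub_exp _ _ _
  · simp

variable {G α} {M : G.Subgraph}

lemma two_mul_re_star_dotProduct_self_le (hα : ∀ u v, α v u = -α u v) (hM : M.IsMatching)
    {x : Fin n → ℂ} (hverts : ∀ i ∉ M.verts, x i = 0)
    (hadj : ∀ i j, M.Adj i j → x i = -(cexp (α i j * I) * x j)) :
    2 * (star x ⬝ᵥ x).re ≤ (star x ⬝ᵥ (magLap G α *ᵥ x)).re := by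
  calc 2 * (star x ⬝ᵥ x).re
      = (∑ i, ∑ j, if M.Adj i j then 4 * normSq (x i) else 0) / 2 := by
        simp_rw [re_star_dotProduct_self, hM.sum_ite_adj, mul_sum, sum_div]
        refine sum_congr rfl fun i _ => ?_
        split_ifs with hi
        · ring
        · simp [hverts i hi]
    _ = (∑ i, ∑ j, if M.Adj i j then normSq (x i - cexp (α i j * I) * x j) else 0) / 2 := by
        congr 1
        refine sum_congr rfl fun i _ => sum_congr rfl fun j _ => ?_
        split_ifs with h
        · have hj : cexp (α i j * I) * x j = -x i := by rw [hadj i j h, neg_neg]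
          rw [hj, sub_neg_eq_add, ← two_mul, normSq_mul]
          norm_num [normSq_apply]
        · rfl
    _ ≤ (∑ i, ∑ j, if G.Adj i j then normSq (x i - cexp (α i j * I) * x j) else 0) / 2 := by
        gcongr with i _ j _
        split_ifs with hM' hG'
        · rfl
        · exact absurd (M.adj_sub hM') hG'
        · exact normSq_nonneg _
        · rfl
    _ = (star x ⬝ᵥ (magLap G α *ᵥ x)).re := (re_star_dotProduct_magLap_mulVec G α hα x).symm

lemma re_star_dotProduct_magLap_mulVec_le (hα : ∀ u v, α v u = -α u v) (hM : M.IsMatching)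
    {x : Fin n → ℂ} (h : ∀ i j, G.Adj i j → ¬ M.Adj i j → x i = cexp (α i j * I) * x j) :
    (star x ⬝ᵥ (magLap G α *ᵥ x)).re ≤ 2 * (star x ⬝ᵥ x).re := by
  calc (star x ⬝ᵥ (magLap G α *ᵥ x)).re
      = (∑ i, ∑ j, if M.Adj i j then normSq (x i - cexp (α i j * I) * x j) else 0) / 2 := by
        rw [re_star_dotProduct_magLap_mulVec G α hα]
        congr 1
        refine sum_congr rfl fun i _ => sum_congr rfl fun j _ => ?_
        by_cases hM' : M.Adj i j
        · simp [hM', M.adj_sub hM']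
        · by_cases hG' : G.Adj i j
          · simp [hM', hG', h i j hG' hM']
          · simp [hM', hG']
    _ ≤ (∑ i, ∑ j, if M.Adj i j then 2 * (normSq (x i) + normSq (x j)) else 0) / 2 := by
        gcongr with i _ j _
        split_ifs
        · exact normSq_sub_exp_mul_I_mul_le _ _ _
        · rfl
    _ = 2 * ∑ i, ∑ j, if M.Adj i j then normSq (x i) else 0 := by
        rw [two_mul]
        nth_rewrite 2 [← sum_sum_ite_swap fun _ _ h => h.symm]
        rw [← sum_add_distrib, sum_div]
        refine sum_congr rfl fun i _ => ?_
        rw [← sum_add_distrib, sum_div]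
        refine sum_congr rfl fun j _ => ?_
        split_ifs <;> ring
    _ = 2 * ∑ i, if i ∈ M.verts then normSq (x i) else 0 := by
        simp_rw [hM.sum_ite_adj]
    _ ≤ 2 * (star x ⬝ᵥ x).re := by
        rw [re_star_dotProduct_self]
        gcongr with i
        split_ifs
        · rfl
        · exact normSq_nonneg _

theorem le_card_magLap_eigenvalues_le_two (hα : ∀ u v, α v u = -α u v) (hM : M.IsMatching) :
    n - (G.edgeSet.ncard - M.edgeSet.ncard) ≤
      #{i | (magLap_isHermitian G α hα).eigenvalues i ≤ 2} := by
  let f : ↥(G.edgeSet \ M.edgeSet) → (Fin n → ℂ) →ₗ[ℂ] ℂ := fun e =>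
    LinearMap.proj e.1.out.1 - cexp (α e.1.out.1 e.1.out.2 * I) • LinearMap.proj e.1.out.2
  have hdim := LinearMap.finrank_sub_card_le_finrank_ker_pi f
  rw [Module.finrank_fin_fun, Nat.card_coe_set_eq, Set.ncard_sdiff M.edgeSet_subset] at hdim
  refine hdim.trans ((magLap_isHermitian G α hα).finrank_le_card_eigenvalues_le 2 _
    fun x hx => re_star_dotProduct_magLap_mulVec_le hα hM fun i j hG hM' => ?_)
  refine Sym2.rel_of_rel_out (r := fun u v => x u = cexp (α u v * I) * x v)
    (fun u v h => by
      simpa using eq_mul_exp_mul_I_mul_symm hα (s := 1) (by norm_num) (by simpa using h)) ?_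
  have := LinearMap.mem_ker_pi_iff.mp hx ⟨s(i, j), G.mem_edgeSet.mpr hG, by rwa [M.mem_edgeSet]⟩
  simpa [f, sub_eq_zero] using this

theorem le_card_two_le_magLap_eigenvalues (hα : ∀ u v, α v u = -α u v) (hM : M.IsMatching) :
    M.edgeSet.ncard ≤ #{i | 2 ≤ (magLap_isHermitian G α hα).eigenvalues i} := by
  let f : ↥M.vertsᶜ ⊕ ↥M.edgeSet → (Fin n → ℂ) →ₗ[ℂ] ℂ := Sum.elim (fun v => LinearMap.proj v.1)
    fun e => LinearMap.proj e.1.out.1 + cexp (α e.1.out.1 e.1.out.2 * I) • LinearMap.proj e.1.out.2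
  have hdim := LinearMap.finrank_sub_card_le_finrank_ker_pi f
  rw [Module.finrank_fin_fun, Nat.card_sum, Nat.card_coe_set_eq, Nat.card_coe_set_eq,
    Set.ncard_compl, hM.ncard_verts, Nat.card_fin] at hdim
  have hverts : 2 * M.edgeSet.ncard ≤ n :=
    hM.ncard_verts ▸ (Set.ncard_le_card _).trans_eq (Nat.card_fin n)
  refine le_trans (by omega) (hdim.trans
    ((magLap_isHermitian G α hα).finrank_le_card_le_eigenvalues 2 _ fun x hx =>
      two_mul_re_star_dotProduct_self_le hα hM (fun i hi => ?_) fun i j h => ?_))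
  · simpa [f] using LinearMap.mem_ker_pi_iff.mp hx (Sum.inl ⟨i, hi⟩)
  · refine Sym2.rel_of_rel_out (r := fun u v => x u = -(cexp (α u v * I) * x v))
      (fun u v h => by
        simpa using eq_mul_exp_mul_I_mul_symm hα (s := -1) (by norm_num) (by simpa using h)) ?_
    have := LinearMap.mem_ker_pi_iff.mp hx (Sum.inr ⟨s(i, j), M.mem_edgeSet.mpr h⟩)
    simpa [f, add_eq_zero_iff_eq_neg] using this

end MagneticLaplacian

lemma exists_isMatching_ncard_eq_matchingNumber {n : ℕ} (G : SimpleGraph (Fin n)) :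
    ∃ M : G.Subgraph, M.IsMatching ∧ M.edgeSet.ncard = matchingNumber G :=
  Nat.sSup_mem (s := {k | ∃ M : G.Subgraph, M.IsMatching ∧ M.edgeSet.ncard = k})
    ⟨0, ⊥, fun _ hv => hv.elim, by simp⟩
    ⟨G.edgeSet.ncard, by
      rintro _ ⟨M, -, rfl⟩
      exact Set.ncard_le_ncard M.edgeSet_subset⟩

theorem connected_matching_bounds_general {n m : ℕ} (G : SimpleGraph (Fin n))
    (hm : G.edgeSet.ncard = m)
    (α : Fin n → Fin n → ℝ) (hα : ∀ u v, α v u = -α u v) :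
    lamb (magLap_isHermitian G α hα) (matchingNumber G + n - m) ≤ ((2 : ℝ) : EReal) ∧
    ((2 : ℝ) : EReal) ≤ lamb (magLap_isHermitian G α hα) (n - matchingNumber G + 1) := by
  obtain ⟨M, hM, hμ⟩ := exists_isMatching_ncard_eq_matchingNumber G
  have hμm : M.edgeSet.ncard ≤ m := hm ▸ Set.ncard_le_ncard M.edgeSet_subset
  have hsplit := card_filter_add_card_filter_not (s := univ)
    fun i => 2 ≤ (magLap_isHermitian G α hα).eigenvalues i
  simp only [not_le, card_univ, Fintype.card_fin] at hsplit
  have hle := le_card_magLap_eigenvalues_le_two hα hM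
  have hge := le_card_two_le_magLap_eigenvalues hα hM
  exact ⟨lamb_le_of_le_card _ (by omega), le_lamb_of_card_lt _ (by omega)⟩

/-- For a connected graph `G` on `n` vertices with `m` edges,
matching number `μ(G)` and any magnetic potential `α`:
`λ_{μ(G)+n-m}(Δ_α^G) ≤ 2 ≤ λ_{n-μ(G)+1}(Δ_α^G)`. -/
theorem connected_matching_bounds {n m : ℕ} (G : SimpleGraph (Fin n)) (hG : G.Connected)
    (hm : G.edgeSet.ncard = m)
    (α : Fin n → Fin n → ℝ) (hα : ∀ u v, α v u = -α u v) :
    lamb (magLap_isHermitian G α hα) (matchingNumber G + n - m) ≤ ((2 : ℝ) : EReal) ∧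
    ((2 : ℝ) : EReal) ≤ lamb (magLap_isHermitian G α hα) (n - matchingNumber G + 1) :=
  connected_matching_bounds_general G hm α hα
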